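/- If the matrix [[C+σ²I, k],[kᵀ, c]] arises from a positive semidefinite kernel with σ² > 0 added only on training points, and if x* coincides with a training point x̄ᵢ (so k equals the i-th column of C and c = Cᵢᵢ), then the posterior variance c − kᵀ(C+σ²I)^{-1}k ≤ σ². -/

import Mathlib

/-!
With `A = C + σ²I`, which is positive definite, substituting `C = A - σ²I` gives
`C A⁻¹ C = C - σ²I + σ⁴ A⁻¹`. Hence the posterior variance equals `σ² - σ⁴ (A⁻¹)ᵢᵢ`, and
`(A⁻¹)ᵢᵢ ≥ 0` because `A⁻¹` is positive definite as well.
-/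

open scoped Matrix

namespace Matrix

variable {n R : Type*} [Fintype n] [DecidableEq n]

theorem col_dotProduct_mulVec_col [CommSemiring R] (M N : Matrix n n R) (i : n) :
    M.col i ⬝ᵥ N *ᵥ M.col i = (Mᵀ * N * M) i i := by
  rw [← mulVec_single_one, mulVec_mulVec, dotProduct_mulVec, ← vecMul_transpose,
    vecMul_vecMul, ← Matrix.mul_assoc, single_one_vecMul, dotProduct_single_one]
  rfl

theorem mul_inv_add_smul_one_mul [CommRing R] (C : Matrix n n R) (s : R)
    (h : IsUnit (C + s • 1).det) :
    C * (C + s • 1)⁻¹ * C = C - s • 1 + (s * s) • (C + s • 1)⁻¹ := by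
  set A := C + s • 1
  have hC : C = A - s • 1 := by simp [A]
  calc C * A⁻¹ * C = (A - s • 1) * A⁻¹ * (A - s • 1) := by rw [← hC]
    _ = A - s • 1 - s • 1 + (s * s) • A⁻¹ := by
      simp only [sub_mul, mul_sub, smul_mul, Matrix.mul_smul, Matrix.one_mul, Matrix.mul_one,
        mul_nonsing_inv A h, nonsing_inv_mul A h, smul_smul]
      abel
    _ = C - s • 1 + (s * s) • A⁻¹ := by rw [← hC]

end Matrix

theorem stmt_19_general {n : ℕ} (C : Matrix (Fin n) (Fin n) ℝ)
    (hpsd : C.PosSemidef) (σ2 : ℝ) (hσ2 : 0 < σ2) (i : Fin n) :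
    C i i - (C.mulVec (Pi.single i 1)) ⬝ᵥ
        (C + σ2 • (1 : Matrix (Fin n) (Fin n) ℝ))⁻¹.mulVec (C.mulVec (Pi.single i 1))
      ≤ σ2 := by
  have hA : (C + σ2 • 1).PosDef := Matrix.PosDef.posSemidef_add hpsd (.smul .one hσ2)
  have hCt : Cᵀ = C := by
    simpa only [Matrix.IsHermitian, Matrix.conjTranspose_eq_transpose_of_trivial]
      using hpsd.isHermitian
  have hdiag : 0 ≤ (C + σ2 • 1)⁻¹ i i := hA.inv.posSemidef.diag_nonneg
  rw [Matrix.mulVec_single_one, Matrix.col_dotProduct_mulVec_col, hCt,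
    Matrix.mul_inv_add_smul_one_mul C σ2 hA.det_pos.ne'.isUnit]
  simp only [Matrix.add_apply, Matrix.sub_apply, Matrix.smul_apply, Matrix.one_apply_eq,
    smul_eq_mul, mul_one]
  linarith [mul_nonneg (mul_self_nonneg σ2) hdiag]

/-- If the test point coincides with the `i`-th training point, so that `k = Ceᵢ` and
`c = Cᵢᵢ`, then the GP posterior variance is bounded by the noise variance:
`Cᵢᵢ − (Ceᵢ)ᵀ(C+σ²I)⁻¹(Ceᵢ) ≤ σ²`, for `C` symmetric positive semidefinite and `σ² > 0`. -/
theorem stmt_19 {n : ℕ} (C : Matrix (Fin n) (Fin n) ℝ) (hC : C.IsSymm)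
    (hpsd : C.PosSemidef) (σ2 : ℝ) (hσ2 : 0 < σ2) (i : Fin n) :
    C i i - (C.mulVec (Pi.single i 1)) ⬝ᵥ
        (C + σ2 • (1 : Matrix (Fin n) (Fin n) ℝ))⁻¹.mulVec (C.mulVec (Pi.single i 1))
      ≤ σ2 :=
  stmt_19_general C hpsd σ2 hσ2 i
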